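/- For any finite simple graph G, Δ(G) − 1 ≤ ∂_s(G) ≤ n(G)·Δ(G)/(Δ(G)+2); equivalently for the upper bound, (Δ(G)+2)·∂_s(G) ≤ n(G)·Δ(G). -/

import Mathlib

/-!
Lower bound: for `v` of maximum degree, `N_e({v}) = N(v)` and `|{v}_w| ≤ 1`.

Upper bound: fix `D` and let `N = N_e(D)`. Counting the edges between `N` and `D` from the side of
`D` gives at most `|D| Δ`. Every vertex of `N` has a neighbour in `D`, and the ones with exactly one
are external private neighbours of vertices of `D_w`, of which there are at most `|D_w| Δ`. Hence
`2|N| ≤ (|D| + |D_w|) Δ`, and together with `|D| + |N| ≤ n` this gives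
`(Δ + 2)(|N| - |D_w|) ≤ n Δ - 2|D_w| ≤ n Δ`.
-/

open Finset

namespace StrongDifferential

variable {V : Type*} [Fintype V] [DecidableEq V] (G : SimpleGraph V) [DecidableRel G.Adj]

/-- The external neighbourhood `N_e(D)` of a set `D`: vertices outside `D`
with a neighbour in `D`. -/
def extNbhd (D : Finset V) : Finset V :=
  univ.filter fun u => u ∉ D ∧ ∃ v ∈ D, G.Adj u v

/-- The external private neighbourhood `epn(v, D)` of `v` with respect to `D`. -/
def epn (v : V) (D : Finset V) : Finset V :=
  univ.filter fun u => u ∉ D ∧ G.neighborFinset u ∩ D = {v}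

/-- `D_w`: the vertices of `D` having a nonempty external private neighbourhood. -/
def weak (D : Finset V) : Finset V :=
  D.filter fun v => (epn G v D).Nonempty

/-- `D_s = D \ D_w`. -/
def strong (D : Finset V) : Finset V :=
  D \ weak G D

/-- The strong differential `∂ₛ(D) = |N_e(D)| - |D_w|` of a set `D`. -/
def sdiffSet (D : Finset V) : ℤ :=
  (extNbhd G D).card - (weak G D).card

/-- The strong differential `∂ₛ(G) = max {∂ₛ(D) : D ⊆ V(G)}` of the graph `G`. -/
def sdiff : ℤ :=
  (univ : Finset V).powerset.sup' ⟨∅, empty_mem_powerset _⟩ (sdiffSet G)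

/-- The differential `∂(D) = |N_e(D)| - |D|` of a set `D`. -/
def diffSet (D : Finset V) : ℤ :=
  (extNbhd G D).card - D.card

/-- The differential `∂(G) = max {∂(D) : D ⊆ V(G)}` of the graph `G`. -/
def gdiff : ℤ :=
  (univ : Finset V).powerset.sup' ⟨∅, empty_mem_powerset _⟩ (diffSet G)

/-- A dominating set: every vertex outside `D` has a neighbour in `D`. -/
def IsDomSet (D : Finset V) : Prop :=
  ∀ v, v ∉ D → ∃ u ∈ D, G.Adj v u

/-- The domination number `γ(G)`. -/
noncomputable def gamma : ℕ :=
  sInf {k | ∃ D : Finset V, IsDomSet G D ∧ D.card = k}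

/-- A 2-dominating set: every vertex outside `D` has at least two neighbours in `D`. -/
def Is2DomSet (D : Finset V) : Prop :=
  ∀ v, v ∉ D → 2 ≤ (G.neighborFinset v ∩ D).card

/-- The 2-domination number `γ₂(G)`. -/
noncomputable def gamma2 : ℕ :=
  sInf {k | ∃ D : Finset V, Is2DomSet G D ∧ D.card = k}

/-- An Italian dominating function: `f : V → {0,1,2}` such that every
vertex of weight `0` has total weight at least `2` on its neighbourhood. -/
def IsIDF (f : V → ℕ) : Prop :=
  (∀ v, f v ≤ 2) ∧ ∀ v, f v = 0 → 2 ≤ ∑ u ∈ G.neighborFinset v, f u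

/-- The Italian domination number `γ_I(G)`. -/
noncomputable def italian : ℕ :=
  sInf {k | ∃ f : V → ℕ, IsIDF G f ∧ ∑ v, f v = k}

/-- `σ(G)`: the number of vertices adjacent to at least two leaves. -/
def sigmaSupp : ℕ :=
  (univ.filter fun v => 2 ≤ ((G.neighborFinset v).filter fun u => G.degree u = 1).card).card

/-- The independence number `α(G)`. -/
noncomputable def indepNum : ℕ :=
  sSup {k | ∃ S : Finset V, (∀ u ∈ S, ∀ w ∈ S, u ≠ w → ¬ G.Adj u w) ∧ S.card = k}

/-- The vertex cover number `β(G)`. -/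
noncomputable def vcNum : ℕ :=
  sInf {k | ∃ S : Finset V, (∀ u v, G.Adj u v → u ∈ S ∨ v ∈ S) ∧ S.card = k}

/-- A semitotal dominating set: a dominating set in which every vertex is
within distance two of another vertex of the set. -/
def IsSemitotalDomSet (D : Finset V) : Prop :=
  IsDomSet G D ∧ ∀ v ∈ D, ∃ u ∈ D, u ≠ v ∧ (G.Adj v u ∨ ∃ w, G.Adj v w ∧ G.Adj w u)

/-- The semitotal domination number `γ_{t2}(G)`. -/
noncomputable def gammaT2 : ℕ :=
  sInf {k | ∃ D : Finset V, IsSemitotalDomSet G D ∧ D.card = k}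

lemma disjoint_extNbhd (D : Finset V) : Disjoint D (extNbhd G D) :=
  disjoint_left.mpr fun _ hu hN => (mem_filter.mp hN).2.1 hu

lemma card_add_card_extNbhd_le (D : Finset V) : #D + #(extNbhd G D) ≤ Fintype.card V := by
  rw [← card_union_of_disjoint (disjoint_extNbhd G D)]
  exact card_le_univ _

lemma extNbhd_singleton (v : V) : extNbhd G {v} = G.neighborFinset v := by
  ext u
  simp only [extNbhd, mem_filter, mem_univ, true_and, mem_singleton, exists_eq_left,
    SimpleGraph.mem_neighborFinset]
  exact ⟨fun h => h.2.symm, fun h => ⟨h.ne', h.symm⟩⟩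

lemma card_epn_le_maxDegree (v : V) (D : Finset V) : #(epn G v D) ≤ G.maxDegree := by
  refine (card_le_card fun u hu => ?_).trans (G.degree_le_maxDegree v)
  have hv : v ∈ G.neighborFinset u ∩ D := (mem_filter.mp hu).2.2 ▸ mem_singleton_self v
  simpa [G.adj_comm] using (mem_inter.mp hv).1

lemma sum_card_neighborFinset_inter_le (s t : Finset V) :
    ∑ u ∈ s, #(G.neighborFinset u ∩ t) ≤ #t * G.maxDegree := by
  have hinter : ∀ u, G.neighborFinset u ∩ t = t.bipartiteAbove G.Adj u := fun u => by
    ext v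
    simp [and_comm]
  simp_rw [hinter, sum_card_bipartiteAbove_eq_sum_card_bipartiteBelow]
  refine sum_le_card_nsmul _ _ _ fun v _ => ?_
  refine (card_le_card fun u hu => ?_).trans (G.degree_le_maxDegree v)
  simpa [G.adj_comm] using (mem_bipartiteBelow G.Adj).mp hu |>.2

lemma mem_weak_and_mem_epn_of_neighborFinset_inter_eq {u v : V} {D : Finset V} (hu : u ∉ D)
    (h : G.neighborFinset u ∩ D = {v}) : v ∈ weak G D ∧ u ∈ epn G v D := by
  have hepn : u ∈ epn G v D := mem_filter.mpr ⟨mem_univ u, hu, h⟩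
  have hvD : v ∈ D := (mem_inter.mp (h ▸ mem_singleton_self v)).2
  exact ⟨mem_filter.mpr ⟨hvD, u, hepn⟩, hepn⟩

lemma card_filter_extNbhd_le (D : Finset V) :
    #{u ∈ extNbhd G D | #(G.neighborFinset u ∩ D) = 1} ≤ #(weak G D) * G.maxDegree := by
  refine (card_le_card fun u hu => ?_).trans
    (card_biUnion_le_card_mul _ _ _ fun v _ => card_epn_le_maxDegree G v D)
  obtain ⟨hN, hone⟩ := mem_filter.mp hu
  obtain ⟨v, hv⟩ := card_eq_one.mp hone
  obtain ⟨hvW, hepn⟩ := mem_weak_and_mem_epn_of_neighborFinset_inter_eq G (mem_filter.mp hN).2.1 hv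
  exact mem_biUnion.mpr ⟨v, hvW, hepn⟩

lemma two_mul_card_extNbhd_le (D : Finset V) :
    2 * #(extNbhd G D) ≤ (#D + #(weak G D)) * G.maxDegree := by
  set c : V → ℕ := fun u => #(G.neighborFinset u ∩ D)
  have hpos : ∀ u ∈ extNbhd G D, 2 ≤ c u + if c u = 1 then 1 else 0 := fun u hu => by
    obtain ⟨-, -, v, hv, hadj⟩ := mem_filter.mp hu
    have : 0 < c u := card_pos.mpr ⟨v, mem_inter.mpr ⟨(G.mem_neighborFinset _ _).mpr hadj, hv⟩⟩
    split_ifs <;> omega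
  calc 2 * #(extNbhd G D)
      ≤ ∑ u ∈ extNbhd G D, (c u + if c u = 1 then 1 else 0) := by
        simpa [mul_comm] using card_nsmul_le_sum _ _ _ hpos
    _ = ∑ u ∈ extNbhd G D, c u + #{u ∈ extNbhd G D | c u = 1} := by
        rw [sum_add_distrib, card_filter]
    _ ≤ #D * G.maxDegree + #(weak G D) * G.maxDegree :=
        add_le_add (sum_card_neighborFinset_inter_le G _ D) (card_filter_extNbhd_le G D)
    _ = (#D + #(weak G D)) * G.maxDegree := (add_mul _ _ _).symm

lemma mul_sdiffSet_le (D : Finset V) :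
    ((G.maxDegree : ℤ) + 2) * sdiffSet G D ≤ (Fintype.card V : ℤ) * G.maxDegree := by
  have hsize : (#D + #(extNbhd G D) : ℤ) ≤ Fintype.card V := by
    exact_mod_cast card_add_card_extNbhd_le G D
  have hedges : (2 * #(extNbhd G D) : ℤ) ≤ (#D + #(weak G D)) * G.maxDegree := by
    exact_mod_cast two_mul_card_extNbhd_le G D
  rw [sdiffSet]
  nlinarith [mul_le_mul_of_nonneg_right hsize (Nat.cast_nonneg (α := ℤ) G.maxDegree)]

lemma sdiffSet_le_sdiff (D : Finset V) : sdiffSet G D ≤ sdiff G :=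
  le_sup' _ (mem_powerset.mpr (subset_univ D))

lemma exists_sdiffSet_eq_sdiff : ∃ D, sdiffSet G D = sdiff G := by
  obtain ⟨D, -, hD⟩ := exists_mem_eq_sup' ⟨∅, empty_mem_powerset _⟩ (sdiffSet G)
  exact ⟨D, hD.symm⟩

lemma maxDegree_sub_one_le_sdiff : (G.maxDegree : ℤ) - 1 ≤ sdiff G := by
  rcases isEmpty_or_nonempty V with _ | _
  · have h : sdiffSet G ∅ = 0 := by simp [sdiffSet, extNbhd, weak]
    rw [G.maxDegree_of_subsingleton, Nat.cast_zero]
    linarith [sdiffSet_le_sdiff G ∅]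
  · obtain ⟨v, hv⟩ := G.exists_maximal_degree_vertex
    have hweak : #(weak G {v}) ≤ 1 := (card_le_card (filter_subset _ _)).trans (card_singleton v).le
    have h : (G.maxDegree : ℤ) - 1 ≤ sdiffSet G {v} := by
      rw [sdiffSet, extNbhd_singleton, hv, G.card_neighborFinset_eq_degree]
      omega
    exact h.trans (sdiffSet_le_sdiff G {v})

theorem stmt_15 {V : Type*} [Fintype V] [DecidableEq V] (G : SimpleGraph V)
    [DecidableRel G.Adj] :
    (G.maxDegree : ℤ) - 1 ≤ sdiff G ∧
      ((G.maxDegree : ℤ) + 2) * sdiff G ≤ (Fintype.card V : ℤ) * G.maxDegree := by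
  obtain ⟨D, hD⟩ := exists_sdiffSet_eq_sdiff G
  exact ⟨maxDegree_sub_one_le_sdiff G, hD ▸ mul_sdiffSet_le G D⟩

end StrongDifferential
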